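/- arXiv:math/0701874 — 2 statements merged into one kernel-verified Lean document; each statement's English description precedes it below -/
import Mathlib

section
/- Let R = ℚ[a0, a1, b0, b1] be graded with each variable in degree 1, and let J be the ideal generated by a1·b1, b0·b1, a0·a1 − b0·a1, a0·a1 + 8·a1², a0·b1 + 24·b1², 4·b0² + 8·a1·b0 − 3·a0·b0, a0²·a1, a0²·b0, and 3·a0³ + 22·a0²·b1. Then the quotient ring R/J is a finite-dimensional ℚ-vector space. -/
open MvPolynomial

noncomputable def a0 : MvPolynomial (Fin 4) ℚ := X 0
noncomputable def a1 : MvPolynomial (Fin 4) ℚ := X 1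
noncomputable def b0 : MvPolynomial (Fin 4) ℚ := X 2
noncomputable def b1 : MvPolynomial (Fin 4) ℚ := X 3

noncomputable def Jplus : Ideal (MvPolynomial (Fin 4) ℚ) :=
  Ideal.span {a1 * b1, b0 * b1, a0 * a1 - b0 * a1, a0 * a1 + 8 * a1 ^ 2,
    a0 * b1 + 24 * b1 ^ 2, 4 * b0 ^ 2 + 8 * a1 * b0 - 3 * a0 * b0,
    a0 ^ 2 * a1, a0 ^ 2 * b0, 3 * a0 ^ 3 + 22 * a0 ^ 2 * b1}

lemma g1_mem : a1 * b1 ∈ Jplus := Ideal.subset_span (by simp)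
lemma g2_mem : b0 * b1 ∈ Jplus := Ideal.subset_span (by simp)
lemma g3_mem : a0 * a1 - b0 * a1 ∈ Jplus := Ideal.subset_span (by simp)
lemma g4_mem : a0 * a1 + 8 * a1 ^ 2 ∈ Jplus := Ideal.subset_span (by simp)
lemma g5_mem : a0 * b1 + 24 * b1 ^ 2 ∈ Jplus := Ideal.subset_span (by simp)
lemma g6_mem : 4 * b0 ^ 2 + 8 * a1 * b0 - 3 * a0 * b0 ∈ Jplus := Ideal.subset_span (by simp)
lemma g7_mem : a0 ^ 2 * a1 ∈ Jplus := Ideal.subset_span (by simp)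
lemma g8_mem : a0 ^ 2 * b0 ∈ Jplus := Ideal.subset_span (by simp)
lemma g9_mem : 3 * a0 ^ 3 + 22 * a0 ^ 2 * b1 ∈ Jplus := Ideal.subset_span (by simp)

lemma mem_of_smul {c : ℚ} (hc : c ≠ 0) {x : MvPolynomial (Fin 4) ℚ}
    (h : C c * x ∈ Jplus) : x ∈ Jplus := by
  have h2 := Jplus.mul_mem_left (C c⁻¹) h
  rwa [← mul_assoc, ← C_mul, inv_mul_cancel₀ hc, C_1, one_mul] at h2

lemma C_num (n : ℕ) : (C (n : ℚ) : MvPolynomial (Fin 4) ℚ) = (n : MvPolynomial (Fin 4) ℚ) := by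
  simp

lemma a0_pow_mem : a0 ^ 4 ∈ Jplus := by
  apply mem_of_smul (c := 75) (by norm_num)
  have h : C (75 : ℚ) * a0 ^ 4 = (242 * a0 ^ 2) * (a0 * b1 + 24 * b1 ^ 2)
      + (25 * a0 - 264 * b1) * (3 * a0 ^ 3 + 22 * a0 ^ 2 * b1) := by
    simp only [a0, a1, b0, b1, show ((C (75:ℚ) : MvPolynomial (Fin 4) ℚ)) = 75 by exact_mod_cast C_num 75, show ((C (64:ℚ) : MvPolynomial (Fin 4) ℚ)) = 64 by exact_mod_cast C_num 64, show ((C (16:ℚ) : MvPolynomial (Fin 4) ℚ)) = 16 by exact_mod_cast C_num 16, show ((C (28800:ℚ) : MvPolynomial (Fin 4) ℚ)) = 28800 by exact_mod_cast C_num 28800]; ring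
  rw [h]
  exact Ideal.add_mem _ (Ideal.mul_mem_left _ _ g5_mem) (Ideal.mul_mem_left _ _ g9_mem)

lemma a1_pow_mem : a1 ^ 3 ∈ Jplus := by
  apply mem_of_smul (c := 64) (by norm_num)
  have h : C (64 : ℚ) * a1 ^ 3 = (-(8 * a1) - a0) * (a0 * a1 - b0 * a1)
      + (8 * a1 - b0) * (a0 * a1 + 8 * a1 ^ 2) + a0 ^ 2 * a1 := by
    simp only [a0, a1, b0, b1, show ((C (75:ℚ) : MvPolynomial (Fin 4) ℚ)) = 75 by exact_mod_cast C_num 75, show ((C (64:ℚ) : MvPolynomial (Fin 4) ℚ)) = 64 by exact_mod_cast C_num 64, show ((C (16:ℚ) : MvPolynomial (Fin 4) ℚ)) = 16 by exact_mod_cast C_num 16, show ((C (28800:ℚ) : MvPolynomial (Fin 4) ℚ)) = 28800 by exact_mod_cast C_num 28800]; ring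
  rw [h]
  exact Ideal.add_mem _ (Ideal.add_mem _ (Ideal.mul_mem_left _ _ g3_mem)
    (Ideal.mul_mem_left _ _ g4_mem)) g7_mem

lemma b0_pow_mem : b0 ^ 3 ∈ Jplus := by
  apply mem_of_smul (c := 16) (by norm_num)
  have h : C (16 : ℚ) * b0 ^ 3 = (32 * b0 + 56 * a0) * (a0 * a1 - b0 * a1)
      + (4 * b0 + 3 * a0) * (4 * b0 ^ 2 + 8 * a1 * b0 - 3 * a0 * b0)
      + (-56) * (a0 ^ 2 * a1) + 9 * (a0 ^ 2 * b0) := by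
    simp only [a0, a1, b0, b1, show ((C (75:ℚ) : MvPolynomial (Fin 4) ℚ)) = 75 by exact_mod_cast C_num 75, show ((C (64:ℚ) : MvPolynomial (Fin 4) ℚ)) = 64 by exact_mod_cast C_num 64, show ((C (16:ℚ) : MvPolynomial (Fin 4) ℚ)) = 16 by exact_mod_cast C_num 16, show ((C (28800:ℚ) : MvPolynomial (Fin 4) ℚ)) = 28800 by exact_mod_cast C_num 28800]; ring
  rw [h]
  exact Ideal.add_mem _ (Ideal.add_mem _ (Ideal.add_mem _ (Ideal.mul_mem_left _ _ g3_mem)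
    (Ideal.mul_mem_left _ _ g6_mem)) (Ideal.mul_mem_left _ _ g7_mem))
    (Ideal.mul_mem_left _ _ g8_mem)

lemma b1_pow_mem : b1 ^ 4 ∈ Jplus := by
  apply mem_of_smul (c := 28800) (by norm_num)
  have h : C (28800 : ℚ) * b1 ^ 4 = (1200 * b1 ^ 2 - 50 * (a0 * b1) + 3 * a0 ^ 2)
        * (a0 * b1 + 24 * b1 ^ 2)
      + (-b1) * (3 * a0 ^ 3 + 22 * a0 ^ 2 * b1) := by
    simp only [a0, a1, b0, b1, show ((C (75:ℚ) : MvPolynomial (Fin 4) ℚ)) = 75 by exact_mod_cast C_num 75, show ((C (64:ℚ) : MvPolynomial (Fin 4) ℚ)) = 64 by exact_mod_cast C_num 64, show ((C (16:ℚ) : MvPolynomial (Fin 4) ℚ)) = 16 by exact_mod_cast C_num 16, show ((C (28800:ℚ) : MvPolynomial (Fin 4) ℚ)) = 28800 by exact_mod_cast C_num 28800]; ring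
  rw [h]
  exact Ideal.add_mem _ (Ideal.mul_mem_left _ _ g5_mem) (Ideal.mul_mem_left _ _ g9_mem)

lemma X_pow_mem : ∀ i : Fin 4, ∃ n : ℕ, 0 < n ∧ (X i : MvPolynomial (Fin 4) ℚ) ^ n ∈ Jplus := by
  intro i
  fin_cases i
  · exact ⟨4, by norm_num, a0_pow_mem⟩
  · exact ⟨3, by norm_num, a1_pow_mem⟩
  · exact ⟨3, by norm_num, b0_pow_mem⟩
  · exact ⟨4, by norm_num, b1_pow_mem⟩

theorem stmt0 : FiniteDimensional ℚ (MvPolynomial (Fin 4) ℚ ⧸ Jplus) := by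
  set R := MvPolynomial (Fin 4) ℚ
  let mk : R →ₐ[ℚ] R ⧸ Jplus := Ideal.Quotient.mkₐ ℚ Jplus
  have hint : ∀ i : Fin 4, IsIntegral ℚ (mk (X i)) := by
    intro i
    obtain ⟨n, hn, hmem⟩ := X_pow_mem i
    apply IsIntegral.of_pow hn
    have : mk (X i) ^ n = 0 := by
      rw [← map_pow]
      exact (Ideal.Quotient.eq_zero_iff_mem (I := Jplus)).2 hmem
    rw [this]
    exact isIntegral_zero
  have hadj : Algebra.adjoin ℚ (Set.range fun i : Fin 4 => mk (X i)) = ⊤ := by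
    have h1 : (Set.range fun i : Fin 4 => mk (X i)) = mk '' (Set.range (X : Fin 4 → R)) := by
      rw [← Set.range_comp]; rfl
    rw [h1, ← AlgHom.map_adjoin, MvPolynomial.adjoin_range_X, Algebra.map_top,
      (AlgHom.range_eq_top _).2 (Ideal.Quotient.mkₐ_surjective ℚ Jplus)]
  have hfg : Submodule.FG (⊤ : Submodule ℚ (R ⧸ Jplus)) := by
    have := fg_adjoin_of_finite (Set.finite_range fun i : Fin 4 => mk (X i))
      (fun x hx => by obtain ⟨i, rfl⟩ := hx; exact hint i)
    rwa [hadj] at this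
  exact Module.finite_def.2 hfg
end

section
/- Let R = ℚ[a0, a1, b0, b1]/J⁺ with J⁺ as in Theorem coho2n. Then the degree-3 graded piece of R is one-dimensional, spanned by the class of a0²·b1, and a0³ = −(22/3)·a0²·b1 in R. -/
open MvPolynomial

noncomputable def gradedPiece (d : ℕ) :
    Submodule ℚ (MvPolynomial (Fin 4) ℚ ⧸ Jplus) :=
  (MvPolynomial.homogeneousSubmodule (Fin 4) ℚ d).map
    (Ideal.Quotient.mkₐ ℚ Jplus).toLinearMap

/- ### Auxiliary: membership in Jplus via explicit combinations -/

lemma memJ (c1 c2 c3 c4 c5 c6 c7 c8 c9 : MvPolynomial (Fin 4) ℚ) :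
    c1 * (a1 * b1) + c2 * (b0 * b1) + c3 * (a0 * a1 - b0 * a1) +
      c4 * (a0 * a1 + 8 * a1 ^ 2) + c5 * (a0 * b1 + 24 * b1 ^ 2) +
      c6 * (4 * b0 ^ 2 + 8 * a1 * b0 - 3 * a0 * b0) + c7 * (a0 ^ 2 * a1) +
      c8 * (a0 ^ 2 * b0) + c9 * (3 * a0 ^ 3 + 22 * a0 ^ 2 * b1) ∈ Jplus := by
  unfold Jplus
  refine Ideal.add_mem _ (Ideal.add_mem _ (Ideal.add_mem _ (Ideal.add_mem _ (Ideal.add_mem _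
    (Ideal.add_mem _ (Ideal.add_mem _ (Ideal.add_mem _ ?_ ?_) ?_) ?_) ?_) ?_) ?_) ?_) ?_
  · exact Ideal.mul_mem_left _ _ (Ideal.subset_span (Set.mem_insert _ _))
  · exact Ideal.mul_mem_left _ _ (Ideal.subset_span
      (Set.mem_insert_of_mem _ (Set.mem_insert _ _)))
  · exact Ideal.mul_mem_left _ _ (Ideal.subset_span
      (Set.mem_insert_of_mem _ (Set.mem_insert_of_mem _ (Set.mem_insert _ _))))
  · exact Ideal.mul_mem_left _ _ (Ideal.subset_span
      (Set.mem_insert_of_mem _ (Set.mem_insert_of_mem _ (Set.mem_insert_of_mem _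
        (Set.mem_insert _ _)))))
  · exact Ideal.mul_mem_left _ _ (Ideal.subset_span
      (Set.mem_insert_of_mem _ (Set.mem_insert_of_mem _ (Set.mem_insert_of_mem _
        (Set.mem_insert_of_mem _ (Set.mem_insert _ _))))))
  · exact Ideal.mul_mem_left _ _ (Ideal.subset_span
      (Set.mem_insert_of_mem _ (Set.mem_insert_of_mem _ (Set.mem_insert_of_mem _
        (Set.mem_insert_of_mem _ (Set.mem_insert_of_mem _ (Set.mem_insert _ _)))))))
  · exact Ideal.mul_mem_left _ _ (Ideal.subset_span
      (Set.mem_insert_of_mem _ (Set.mem_insert_of_mem _ (Set.mem_insert_of_mem _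
        (Set.mem_insert_of_mem _ (Set.mem_insert_of_mem _ (Set.mem_insert_of_mem _
          (Set.mem_insert _ _))))))))
  · exact Ideal.mul_mem_left _ _ (Ideal.subset_span
      (Set.mem_insert_of_mem _ (Set.mem_insert_of_mem _ (Set.mem_insert_of_mem _
        (Set.mem_insert_of_mem _ (Set.mem_insert_of_mem _ (Set.mem_insert_of_mem _
          (Set.mem_insert_of_mem _ (Set.mem_insert _ _)))))))))
  · exact Ideal.mul_mem_left _ _ (Ideal.subset_span
      (Set.mem_insert_of_mem _ (Set.mem_insert_of_mem _ (Set.mem_insert_of_mem _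
        (Set.mem_insert_of_mem _ (Set.mem_insert_of_mem _ (Set.mem_insert_of_mem _
          (Set.mem_insert_of_mem _ (Set.mem_insert_of_mem _ rfl)))))))))

lemma memJ' (q c1 c2 c3 c4 c5 c6 c7 c8 c9 : MvPolynomial (Fin 4) ℚ)
    (h : q = c1 * (a1 * b1) + c2 * (b0 * b1) + c3 * (a0 * a1 - b0 * a1) +
      c4 * (a0 * a1 + 8 * a1 ^ 2) + c5 * (a0 * b1 + 24 * b1 ^ 2) +
      c6 * (4 * b0 ^ 2 + 8 * a1 * b0 - 3 * a0 * b0) + c7 * (a0 ^ 2 * a1) +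
      c8 * (a0 ^ 2 * b0) + c9 * (3 * a0 ^ 3 + 22 * a0 ^ 2 * b1)) : q ∈ Jplus := by
  rw [h]; exact memJ c1 c2 c3 c4 c5 c6 c7 c8 c9

lemma mk_C_mul (r : ℚ) (q : MvPolynomial (Fin 4) ℚ) :
    Ideal.Quotient.mk Jplus (C r * q) = r • Ideal.Quotient.mk Jplus q := by
  rw [← smul_eq_C_mul, ← Ideal.Quotient.mkₐ_eq_mk ℚ, map_smul]

lemma red_eq (p : MvPolynomial (Fin 4) ℚ) (n m : ℚ) (hn : n ≠ 0)
    (h : C n * p - C m * (a0 ^ 2 * b1) ∈ Jplus) :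
    Ideal.Quotient.mk Jplus p = (m / n) • Ideal.Quotient.mk Jplus (a0 ^ 2 * b1) := by
  have h2 : n • Ideal.Quotient.mk Jplus p = m • Ideal.Quotient.mk Jplus (a0 ^ 2 * b1) := by
    rw [← mk_C_mul, ← mk_C_mul]
    exact Ideal.Quotient.eq.mpr h
  calc Ideal.Quotient.mk Jplus p
      = (n⁻¹ * n) • Ideal.Quotient.mk Jplus p := by rw [inv_mul_cancel₀ hn, one_smul]
    _ = n⁻¹ • (n • Ideal.Quotient.mk Jplus p) := mul_smul _ _ _
    _ = n⁻¹ • (m • Ideal.Quotient.mk Jplus (a0 ^ 2 * b1)) := by rw [h2]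
    _ = (m / n) • Ideal.Quotient.mk Jplus (a0 ^ 2 * b1) := by
        rw [smul_smul, div_eq_inv_mul]

lemma red (p : MvPolynomial (Fin 4) ℚ) (n m : ℚ) (hn : n ≠ 0)
    (h : C n * p - C m * (a0 ^ 2 * b1) ∈ Jplus) :
    Ideal.Quotient.mk Jplus p ∈
      Submodule.span ℚ {Ideal.Quotient.mk Jplus (a0 ^ 2 * b1)} :=
  Submodule.mem_span_singleton.mpr ⟨m / n, (red_eq p n m hn h).symm⟩

lemma mon_mem (i j k l : ℕ) (h : i + j + k + l = 3) :
    Ideal.Quotient.mk Jplus (X 0 ^ i * X 1 ^ j * X 2 ^ k * X 3 ^ l) ∈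
      Submodule.span ℚ {Ideal.Quotient.mk Jplus (a0 ^ 2 * b1)} := by
  have hi : i ≤ 3 := by omega
  have hj : j ≤ 3 := by omega
  have hk : k ≤ 3 := by omega
  have hl : l ≤ 3 := by omega
  interval_cases i <;> interval_cases j <;> interval_cases k <;> interval_cases l <;> try omega
  · exact red _ 576 1 (by norm_num) (memJ' _ 0 0 0 0 (24*b1 - a0) 0 0 0 0
      (by simp only [a0, a1, b0, b1, map_ofNat, map_one]; ring))
  · exact red _ 1 0 one_ne_zero (memJ' _ 0 b1 0 0 0 0 0 0 0
      (by simp only [a0, a1, b0, b1, map_one, map_zero]; ring))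
  · exact red _ 1 0 one_ne_zero (memJ' _ 0 b0 0 0 0 0 0 0 0
      (by simp only [a0, a1, b0, b1, map_one, map_zero]; ring))
  · exact red _ 16 0 (by norm_num) (memJ' _ 0 0 (56*a0 + 32*b0) 0 0 (4*b0 + 3*a0) (-56) 9 0
      (by simp only [a0, a1, b0, b1, map_ofNat, map_zero]; ring))
  · exact red _ 1 0 one_ne_zero (memJ' _ b1 0 0 0 0 0 0 0 0
      (by simp only [a0, a1, b0, b1, map_one, map_zero]; ring))
  · exact red _ 1 0 one_ne_zero (memJ' _ b0 0 0 0 0 0 0 0 0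
      (by simp only [a0, a1, b0, b1, map_one, map_zero]; ring))
  · exact red _ 1 0 one_ne_zero (memJ' _ 0 0 (-(a0 + b0)) 0 0 0 1 0 0
      (by simp only [a0, a1, b0, b1, map_one, map_zero]; ring))
  · exact red _ 1 0 one_ne_zero (memJ' _ a1 0 0 0 0 0 0 0 0
      (by simp only [a0, a1, b0, b1, map_one, map_zero]; ring))
  · exact red _ 8 0 (by norm_num) (memJ' _ 0 0 (-8*a1) a0 0 0 (-1) 0 0
      (by simp only [a0, a1, b0, b1, map_ofNat, map_zero]; ring))
  · exact red _ 64 0 (by norm_num) (memJ' _ 0 0 0 (8*a1 - a0) 0 0 1 0 0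
      (by simp only [a0, a1, b0, b1, map_ofNat, map_zero]; ring))
  · exact red _ 24 (-1) (by norm_num) (memJ' _ 0 0 0 0 a0 0 0 0 0
      (by simp only [a0, a1, b0, b1, map_ofNat, map_neg, map_one]; ring))
  · exact red _ 1 0 one_ne_zero (memJ' _ 0 a0 0 0 0 0 0 0 0
      (by simp only [a0, a1, b0, b1, map_one, map_zero]; ring))
  · exact red _ 4 0 (by norm_num) (memJ' _ 0 0 (8*a0) 0 0 a0 (-8) 3 0
      (by simp only [a0, a1, b0, b1, map_ofNat, map_zero]; ring))
  · exact red _ 1 0 one_ne_zero (memJ' _ a0 0 0 0 0 0 0 0 0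
      (by simp only [a0, a1, b0, b1, map_one, map_zero]; ring))
  · exact red _ 1 0 one_ne_zero (memJ' _ 0 0 (-a0) 0 0 0 1 0 0
      (by simp only [a0, a1, b0, b1, map_one, map_zero]; ring))
  · exact red _ 8 0 (by norm_num) (memJ' _ 0 0 0 a0 0 0 (-1) 0 0
      (by simp only [a0, a1, b0, b1, map_ofNat, map_zero]; ring))
  · exact red _ 1 1 one_ne_zero (memJ' _ 0 0 0 0 0 0 0 0 0
      (by simp only [a0, a1, b0, b1, map_one]; ring))
  · exact red _ 1 0 one_ne_zero (memJ' _ 0 0 0 0 0 0 0 1 0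
      (by simp only [a0, a1, b0, b1, map_one, map_zero]; ring))
  · exact red _ 1 0 one_ne_zero (memJ' _ 0 0 0 0 0 0 1 0 0
      (by simp only [a0, a1, b0, b1, map_one, map_zero]; ring))
  · exact red _ 3 (-22) (by norm_num) (memJ' _ 0 0 0 0 0 0 0 0 1
      (by simp only [a0, a1, b0, b1, map_ofNat, map_neg]; ring))

/- ### The linear functional showing a0^2*b1 ∉ Jplus -/

noncomputable def phi (p : MvPolynomial (Fin 4) ℚ) : ℚ :=
  -4224 * coeff (Finsupp.single 0 3) p
    + 576 * coeff (Finsupp.single 0 2 + Finsupp.single 3 1) p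
    - 24 * coeff (Finsupp.single 0 1 + Finsupp.single 3 2) p
    + coeff (Finsupp.single 3 3) p

lemma phi_add (p q : MvPolynomial (Fin 4) ℚ) : phi (p + q) = phi p + phi q := by
  simp only [phi, coeff_add]; ring

lemma phi_mul_X1 (q : MvPolynomial (Fin 4) ℚ) : phi (q * X 1) = 0 := by
  simp [phi, coeff_mul_X', Finsupp.mem_support_iff, Finsupp.single_apply, Finsupp.add_apply]

lemma phi_mul_X2 (q : MvPolynomial (Fin 4) ℚ) : phi (q * X 2) = 0 := by
  simp [phi, coeff_mul_X', Finsupp.mem_support_iff, Finsupp.single_apply, Finsupp.add_apply]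

lemma phi_g5 (f : MvPolynomial (Fin 4) ℚ) : phi (f * (a0 * b1 + 24 * b1 ^ 2)) = 0 := by
  have e1 : f * (a0 * b1 + 24 * b1 ^ 2)
      = f * monomial (Finsupp.single 0 1 + Finsupp.single 3 1) 1
        + C 24 * (f * monomial (Finsupp.single 3 2) 1) := by
    unfold a0 b1
    rw [show ((24 : MvPolynomial (Fin 4) ℚ)) = C (24 : ℚ) from (map_ofNat _ _).symm,
      show (X (0:Fin 4) * X 3 : MvPolynomial (Fin 4) ℚ)
        = monomial (Finsupp.single 0 1 + Finsupp.single 3 1) 1 from by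
          rw [← pow_one (X (0:Fin 4)), ← pow_one (X (3:Fin 4)), X_pow_eq_monomial,
            X_pow_eq_monomial, monomial_mul, one_mul],
      X_pow_eq_monomial]
    ring
  have c1 : ¬ (Finsupp.single (0:Fin 4) 1 + Finsupp.single 3 1 ≤ Finsupp.single 0 3) := by
    intro h; have := Finsupp.le_def.mp h 3; simp [Finsupp.single_apply] at this
  have c2 : (Finsupp.single (0:Fin 4) 1 + Finsupp.single 3 1
      ≤ Finsupp.single 0 2 + Finsupp.single 3 1) := by
    rw [Finsupp.le_def]; intro i; fin_cases i <;> simp [Finsupp.single_apply]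
  have c3 : (Finsupp.single (0:Fin 4) 1 + Finsupp.single 3 1
      ≤ Finsupp.single 0 1 + Finsupp.single 3 2) := by
    rw [Finsupp.le_def]; intro i; fin_cases i <;> simp [Finsupp.single_apply]
  have c4 : ¬ (Finsupp.single (0:Fin 4) 1 + Finsupp.single 3 1 ≤ Finsupp.single 3 3) := by
    intro h; have := Finsupp.le_def.mp h 0; simp [Finsupp.single_apply] at this
  have d1 : ¬ (Finsupp.single (3:Fin 4) 2 ≤ Finsupp.single 0 3) := by
    intro h; have := Finsupp.le_def.mp h 3; simp [Finsupp.single_apply] at this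
  have d2 : ¬ (Finsupp.single (3:Fin 4) 2 ≤ Finsupp.single 0 2 + Finsupp.single 3 1) := by
    intro h; have := Finsupp.le_def.mp h 3; simp [Finsupp.single_apply] at this
  have d3 : (Finsupp.single (3:Fin 4) 2 ≤ Finsupp.single 0 1 + Finsupp.single 3 2) := by
    rw [Finsupp.le_def]; intro i; fin_cases i <;> simp [Finsupp.single_apply]
  have d4 : (Finsupp.single (3:Fin 4) 2 ≤ Finsupp.single 3 3) := by
    rw [Finsupp.le_def]; intro i; fin_cases i <;> simp [Finsupp.single_apply]
  have s2 : (Finsupp.single (0:Fin 4) 2 + Finsupp.single 3 1)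
      - (Finsupp.single 0 1 + Finsupp.single 3 1) = Finsupp.single 0 1 := by
    ext i; fin_cases i <;> simp [Finsupp.single_apply]
  have s3 : (Finsupp.single (0:Fin 4) 1 + Finsupp.single 3 2)
      - (Finsupp.single 0 1 + Finsupp.single 3 1) = Finsupp.single 3 1 := by
    ext i; fin_cases i <;> simp [Finsupp.single_apply]
  have t3 : (Finsupp.single (0:Fin 4) 1 + Finsupp.single 3 2)
      - (Finsupp.single 3 2) = Finsupp.single 0 1 := by
    ext i; fin_cases i <;> simp [Finsupp.single_apply]
  have t4 : (Finsupp.single (3:Fin 4) 3) - (Finsupp.single 3 2) = Finsupp.single 3 1 := by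
    ext i; fin_cases i <;> simp [Finsupp.single_apply]
  rw [e1]
  simp only [phi, coeff_add, coeff_C_mul, coeff_mul_monomial', if_neg c1, if_pos c2, if_pos c3,
    if_neg c4, if_neg d1, if_neg d2, if_pos d3, if_pos d4, s2, s3, t3, t4, mul_one]
  ring

lemma phi_g9 (f : MvPolynomial (Fin 4) ℚ) :
    phi (f * (3 * a0 ^ 3 + 22 * a0 ^ 2 * b1)) = 0 := by
  have e1 : f * (3 * a0 ^ 3 + 22 * a0 ^ 2 * b1)
      = C 3 * (f * monomial (Finsupp.single 0 3) 1)
        + C 22 * (f * monomial (Finsupp.single 0 2 + Finsupp.single 3 1) 1) := by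
    have m1 : ((monomial (Finsupp.single (0:Fin 4) 3)) (1:ℚ)) = X 0 ^ 3 :=
      X_pow_eq_monomial.symm
    have m2 : ((monomial (Finsupp.single (0:Fin 4) 2 + Finsupp.single 3 1)) (1:ℚ))
        = X 0 ^ 2 * X 3 := by
      rw [← pow_one (X (3:Fin 4)), X_pow_eq_monomial, X_pow_eq_monomial,
        monomial_mul, one_mul]
    unfold a0 b1
    rw [show ((3 : MvPolynomial (Fin 4) ℚ)) = C (3 : ℚ) from (map_ofNat _ _).symm,
      show ((22 : MvPolynomial (Fin 4) ℚ)) = C (22 : ℚ) from (map_ofNat _ _).symm,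
      m1, m2]
    ring
  have c1 : (Finsupp.single (0:Fin 4) 3 ≤ Finsupp.single 0 3) := le_refl _
  have c2 : ¬ (Finsupp.single (0:Fin 4) 3 ≤ Finsupp.single 0 2 + Finsupp.single 3 1) := by
    intro h; have := Finsupp.le_def.mp h 0; simp [Finsupp.single_apply] at this
  have c3 : ¬ (Finsupp.single (0:Fin 4) 3 ≤ Finsupp.single 0 1 + Finsupp.single 3 2) := by
    intro h; have := Finsupp.le_def.mp h 0; simp [Finsupp.single_apply] at this
  have c4 : ¬ (Finsupp.single (0:Fin 4) 3 ≤ Finsupp.single 3 3) := by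
    intro h; have := Finsupp.le_def.mp h 0; simp [Finsupp.single_apply] at this
  have d1 : ¬ (Finsupp.single (0:Fin 4) 2 + Finsupp.single 3 1 ≤ Finsupp.single 0 3) := by
    intro h; have := Finsupp.le_def.mp h 3; simp [Finsupp.single_apply] at this
  have d2 : (Finsupp.single (0:Fin 4) 2 + Finsupp.single 3 1
      ≤ Finsupp.single 0 2 + Finsupp.single 3 1) := le_refl _
  have d3 : ¬ (Finsupp.single (0:Fin 4) 2 + Finsupp.single 3 1
      ≤ Finsupp.single 0 1 + Finsupp.single 3 2) := by
    intro h; have := Finsupp.le_def.mp h 0; simp [Finsupp.single_apply] at this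
  have d4 : ¬ (Finsupp.single (0:Fin 4) 2 + Finsupp.single 3 1 ≤ Finsupp.single 3 3) := by
    intro h; have := Finsupp.le_def.mp h 0; simp [Finsupp.single_apply] at this
  have s1 : (Finsupp.single (0:Fin 4) 3) - (Finsupp.single 0 3) = 0 := by
    ext i; fin_cases i <;> simp [Finsupp.single_apply]
  have s2 : (Finsupp.single (0:Fin 4) 2 + Finsupp.single 3 1)
      - (Finsupp.single 0 2 + Finsupp.single 3 1) = 0 := by
    ext i; fin_cases i <;> simp [Finsupp.single_apply]
  rw [e1]
  simp only [phi, coeff_add, coeff_C_mul, coeff_mul_monomial', if_pos c1, if_neg c2, if_neg c3,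
    if_neg c4, if_neg d1, if_pos d2, if_neg d3, if_neg d4, s1, s2, mul_one]
  ring

lemma phi_vanish : ∀ q ∈ Jplus, ∀ f : MvPolynomial (Fin 4) ℚ, phi (f * q) = 0 := by
  intro q hq
  refine Submodule.span_induction ?_ ?_ ?_ ?_ hq
  · intro x hx f
    simp only [Set.mem_insert_iff, Set.mem_singleton_iff] at hx
    rcases hx with rfl | rfl | rfl | rfl | rfl | rfl | rfl | rfl | rfl
    · rw [show f * (a1 * b1) = (f * b1) * X 1 from by unfold a1; ring]; exact phi_mul_X1 _
    · rw [show f * (b0 * b1) = (f * b1) * X 2 from by unfold b0; ring]; exact phi_mul_X2 _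
    · rw [show f * (a0 * a1 - b0 * a1) = (f * (a0 - b0)) * X 1 from by unfold a1; ring]
      exact phi_mul_X1 _
    · rw [show f * (a0 * a1 + 8 * a1 ^ 2) = (f * (a0 + 8 * X 1)) * X 1 from by unfold a1; ring]
      exact phi_mul_X1 _
    · exact phi_g5 f
    · rw [show f * (4 * b0 ^ 2 + 8 * a1 * b0 - 3 * a0 * b0)
        = (f * (4 * X 2 + 8 * a1 - 3 * a0)) * X 2 from by unfold b0; ring]
      exact phi_mul_X2 _
    · rw [show f * (a0 ^ 2 * a1) = (f * a0 ^ 2) * X 1 from by unfold a1; ring]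
      exact phi_mul_X1 _
    · rw [show f * (a0 ^ 2 * b0) = (f * a0 ^ 2) * X 2 from by unfold b0; ring]
      exact phi_mul_X2 _
    · exact phi_g9 f
  · intro f; simp [phi]
  · intro x y _ _ hx hy f
    rw [mul_add, phi_add, hx f, hy f, add_zero]
  · intro a x _ hx f
    rw [smul_eq_mul, ← mul_assoc]
    exact hx (f * a)

lemma phi_target : phi (a0 ^ 2 * b1) = 576 := by
  have e1 : (a0 ^ 2 * b1 : MvPolynomial (Fin 4) ℚ)
      = monomial (Finsupp.single 0 2 + Finsupp.single 3 1) 1 := by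
    unfold a0 b1
    rw [← pow_one (X (3:Fin 4)), X_pow_eq_monomial, X_pow_eq_monomial, monomial_mul, one_mul]
  have h1 : (Finsupp.single (0:Fin 4) 2 + Finsupp.single 3 1) ≠ Finsupp.single 0 3 := by
    intro h; have := DFunLike.congr_fun h 3; simp [Finsupp.single_apply] at this
  have h3 : (Finsupp.single (0:Fin 4) 2 + Finsupp.single 3 1)
      ≠ Finsupp.single 0 1 + Finsupp.single 3 2 := by
    intro h; have := DFunLike.congr_fun h 3; simp [Finsupp.single_apply] at this
  have h4 : (Finsupp.single (0:Fin 4) 2 + Finsupp.single 3 1) ≠ Finsupp.single 3 3 := by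
    intro h; have := DFunLike.congr_fun h 0; simp [Finsupp.single_apply] at this
  rw [e1]
  simp only [phi, coeff_monomial, if_pos rfl, if_neg h1, if_neg h3, if_neg h4,
    if_neg (Ne.symm h1), if_neg (Ne.symm h3), if_neg (Ne.symm h4)]
  norm_num

lemma target_ne_zero : Ideal.Quotient.mk Jplus (a0 ^ 2 * b1) ≠ 0 := by
  intro h0
  have hmem : (a0 ^ 2 * b1) ∈ Jplus := by
    rwa [Ideal.Quotient.eq_zero_iff_mem] at h0
  have := phi_vanish _ hmem 1
  rw [one_mul, phi_target] at this
  norm_num at this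

/- ### The span equality -/

lemma span_eq : gradedPiece 3
    = Submodule.span ℚ {Ideal.Quotient.mk Jplus (a0 ^ 2 * b1)} := by
  apply le_antisymm
  · rintro x ⟨p, hp, rfl⟩
    rw [SetLike.mem_coe, mem_homogeneousSubmodule] at hp
    show Ideal.Quotient.mk Jplus p ∈ _
    conv_rhs => rw [← support_sum_monomial_coeff p]
    rw [map_sum]
    refine Submodule.sum_mem _ fun m hm => ?_
    have hc : coeff m p ≠ 0 := mem_support_iff.mp hm
    have hdeg := hp hc
    have h4 : m 0 + m 1 + m 2 + m 3 = 3 := by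
      rw [Finsupp.weight_apply, Finsupp.sum_fintype _ _ (fun i => by simp),
        Fin.sum_univ_four] at hdeg
      simpa using hdeg
    have hmon : (monomial m (coeff m p) : MvPolynomial (Fin 4) ℚ)
        = C (coeff m p) * (X 0 ^ m 0 * X 1 ^ m 1 * X 2 ^ m 2 * X 3 ^ m 3) := by
      rw [monomial_eq]
      congr 1
      rw [Finsupp.prod_fintype _ _ (fun i => pow_zero _), Fin.prod_univ_four]
    rw [hmon, mk_C_mul]
    exact Submodule.smul_mem _ _ (mon_mem _ _ _ _ h4)
  · rw [Submodule.span_le, Set.singleton_subset_iff]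
    refine ⟨a0 ^ 2 * b1, ?_, rfl⟩
    rw [SetLike.mem_coe, mem_homogeneousSubmodule]
    have : (a0 ^ 2 * b1 : MvPolynomial (Fin 4) ℚ).IsHomogeneous (1 * 2 + 1) := by
      unfold a0 b1
      exact ((isHomogeneous_X ℚ _).pow 2).mul (isHomogeneous_X ℚ _)
    simpa using this

theorem stmt15 :
    Module.finrank ℚ (gradedPiece 3) = 1 ∧
    gradedPiece 3 = Submodule.span ℚ {Ideal.Quotient.mk Jplus (a0 ^ 2 * b1)} ∧
    Ideal.Quotient.mk Jplus (a0 ^ 3) =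
      -(22 / 3 : ℚ) • Ideal.Quotient.mk Jplus (a0 ^ 2 * b1) := by
  refine ⟨?_, span_eq, ?_⟩
  · rw [show gradedPiece 3 = _ from span_eq]
    exact finrank_span_singleton target_ne_zero
  · have := red_eq (a0 ^ 3) 3 (-22) (by norm_num)
      (memJ' _ 0 0 0 0 0 0 0 0 1
        (by simp only [a0, a1, b0, b1, map_ofNat, map_neg]; ring))
    rw [this]
    norm_num
end
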